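/- Under the MIS/RMIS tableau setup, assume the inner table is third order and row-sum consistent, i.e. (b^I)^⊺𝟙 = 1, (b^I)^⊺c^I = 1/2, (b^I)^⊺(c^I × c^I) = 1/3, (b^I)^⊺A^I c^I = 1/6, and A^I 𝟙 = c^I. Then (b^O)^⊺ A^{s,f} A^{f,f} c^f = (1/6)(b^O)^⊺((c^O)^3), where (c^O)^3 is the componentwise cube. -/
import Mathlib


open Matrix BigOperators Finset

/-- The increments `d_j = c^O_{j+1} - c^O_j` (with `d_{s^O} = 1 - c^O_{s^O}`). -/
noncomputable def misD (sO : ℕ) (cO : Fin sO → ℝ) (j : Fin sO) : ℝ :=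
  if h : j.val + 1 < sO then cO ⟨j.val + 1, h⟩ - cO j else 1 - cO j

/-- The fast-fast GARK coefficient matrix `A^{f,f}` of the MIS/RMIS tableau. -/
noncomputable def misAff (sI sO : ℕ) (AI : Matrix (Fin sI) (Fin sI) ℝ)
    (bI : Fin sI → ℝ) (cO : Fin sO → ℝ) :
    Matrix (Fin sO × Fin sI) (Fin sO × Fin sI) ℝ :=
  fun ip jq =>
    if jq.1 < ip.1 then misD sO cO jq.1 * bI jq.2
    else if jq.1 = ip.1 then misD sO cO ip.1 * AI ip.2 jq.2
    else 0

/-- The slow-fast GARK coefficient matrix `A^{s,f}` of the MIS/RMIS tableau. -/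
noncomputable def misAsf (sI sO : ℕ) (bI : Fin sI → ℝ) (cO : Fin sO → ℝ) :
    Matrix (Fin sO) (Fin sO × Fin sI) ℝ :=
  fun i jq => if jq.1 < i then misD sO cO jq.1 * bI jq.2 else 0

/-- The fast-slow GARK coefficient matrix `A^{f,s}` of the MIS/RMIS tableau. -/
noncomputable def misAfs (sI sO : ℕ) (cI : Fin sI → ℝ)
    (AO : Matrix (Fin sO) (Fin sO) ℝ) (bO : Fin sO → ℝ) :
    Matrix (Fin sO × Fin sI) (Fin sO) ℝ :=
  fun ip j =>
    if ip.1.val = 0 then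
      (if h : 1 < sO then cI ip.2 * AO ⟨1, h⟩ j else 0)
    else if h : ip.1.val + 1 < sO then
      AO ip.1 j + cI ip.2 * (AO ⟨ip.1.val + 1, h⟩ j - AO ip.1 j)
    else
      AO ip.1 j + cI ip.2 * (bO j - AO ip.1 j)

/-- The fast abscissae `c^f` of the MIS/RMIS tableau. -/
noncomputable def misCf (sI sO : ℕ) (cI : Fin sI → ℝ) (cO : Fin sO → ℝ) :
    Fin sO × Fin sI → ℝ :=
  fun ip => cO ip.1 + misD sO cO ip.1 * cI ip.2

/-- The RMIS fast weights `b^f` (i-th block is `b^O_i e_1`). -/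
noncomputable def misBf (sI sO : ℕ) (bO : Fin sO → ℝ) : Fin sO × Fin sI → ℝ :=
  fun ip => if ip.2.val = 0 then bO ip.1 else 0

/-- The vector `v^O` appearing in the fourth-order RMIS condition. -/
noncomputable def misV (sO : ℕ) (bO cO : Fin sO → ℝ) (i : Fin sO) : ℝ :=
  if i.val = 0 then 0
  else if h : i.val + 1 < sO then
    bO i * (cO i - cO ⟨i.val - 1, by have := i.isLt; omega⟩) +
      (cO ⟨i.val + 1, h⟩ - cO ⟨i.val - 1, by have := i.isLt; omega⟩) *
        ∑ j ∈ Finset.univ.filter (fun j => i < j), bO j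
  else bO i * (cO i - cO ⟨i.val - 1, by have := i.isLt; omega⟩)


noncomputable def misC (sO : ℕ) (cO : Fin sO → ℝ) (n : ℕ) : ℝ :=
  if h : n < sO then cO ⟨n, h⟩ else 1

lemma misD_eq_misC (sO : ℕ) (cO : Fin sO → ℝ) (n : ℕ) (h : n < sO) :
    misD sO cO ⟨n, h⟩ = misC sO cO (n + 1) - misC sO cO n := by
  unfold misD misC
  rw [dif_pos h]
  split_ifs <;> rfl

lemma sum_filter_lt_eq {s : ℕ} (F : Fin s → ℝ) (G : ℕ → ℝ)
    (hFG : ∀ (n : ℕ) (h : n < s), F ⟨n, h⟩ = G n) (i : Fin s) :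
    ∑ j ∈ Finset.univ.filter (· < i), F j = ∑ n ∈ Finset.range i.val, G n := by
  rw [Finset.sum_filter]
  have h1 : ∀ j : Fin s, (if j < i then F j else 0)
      = (fun n => if h : n < s then (if n < i.val then G n else 0) else 0) j.val := by
    intro j
    simp only [j.isLt, dif_pos, Fin.lt_def]
    rcases lt_or_ge j.val i.val with h | h
    · simp [h, hFG j.val j.isLt]
    · simp [not_lt.2 h]
  calc ∑ j : Fin s, (if j < i then F j else 0)
      = ∑ n ∈ Finset.range s, (if h : n < s then (if n < i.val then G n else 0) else 0) := by
        rw [← Fin.sum_univ_eq_sum_range]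
        exact Finset.sum_congr rfl (fun j _ => h1 j)
    _ = ∑ n ∈ Finset.range s, (if n < i.val then G n else 0) := by
        refine Finset.sum_congr rfl (fun n hn => ?_)
        rw [dif_pos (Finset.mem_range.1 hn)]
    _ = ∑ n ∈ (Finset.range s).filter (· < i.val), G n := by rw [Finset.sum_filter]
    _ = ∑ n ∈ Finset.range i.val, G n := by
        congr 1
        ext n
        simp only [Finset.mem_filter, Finset.mem_range]
        have := i.isLt
        omega

lemma key_telescope {s : ℕ} (F : Fin s → ℝ) (f : ℕ → ℝ)
    (hf0 : f 0 = 0)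
    (hFf : ∀ (n : ℕ) (h : n < s), F ⟨n, h⟩ = f (n + 1) - f n) (i : Fin s) :
    ∑ j ∈ Finset.univ.filter (· < i), F j = f i.val := by
  rw [sum_filter_lt_eq F (fun n => f (n + 1) - f n) hFf i, Finset.sum_range_sub f i.val, hf0,
    sub_zero]

/-- If the inner table is third order and row-sum consistent, then
`(b^O)ᵀ A^{s,f} A^{f,f} c^f = (1/6)(b^O)ᵀ((c^O)^3)`. -/
theorem bO_asf_aff_cf (sI sO : ℕ) (hsI : 1 ≤ sI) (hsO : 2 ≤ sO)
    (AI : Matrix (Fin sI) (Fin sI) ℝ) (bI cI : Fin sI → ℝ)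
    (AO : Matrix (Fin sO) (Fin sO) ℝ) (bO cO : Fin sO → ℝ)
    (hcO1 : cO ⟨0, by omega⟩ = 0)
    (hbI1 : ∑ q, bI q = 1)
    (hbI2 : ∑ q, bI q * cI q = 1 / 2)
    (hbI3 : ∑ q, bI q * (cI q * cI q) = 1 / 3)
    (hbI4 : ∑ q, bI q * (AI *ᵥ cI) q = 1 / 6)
    (hAIrow : ∀ p, ∑ q, AI p q = cI p) :
    bO ⬝ᵥ (misAsf sI sO bI cO *ᵥ (misAff sI sO AI bI cO *ᵥ misCf sI sO cI cO))
      = (1 / 6) * ∑ i, bO i * (cO i) ^ 3 := by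
  classical
  have h0s : 0 < sO := by omega
  set d := misD sO cO with hd
  set C := misC sO cO with hCdef
  have hC0 : C 0 = 0 := by
    rw [hCdef]; unfold misC; rw [dif_pos h0s]; exact hcO1
  have hCval : ∀ i : Fin sO, C i.val = cO i := by
    intro i; rw [hCdef]; unfold misC; rw [dif_pos i.isLt]
  have hdC : ∀ (n : ℕ) (h : n < sO), d ⟨n, h⟩ = C (n + 1) - C n := by
    intro n h; rw [hd, hCdef]; exact misD_eq_misC sO cO n h
  have key1 : ∀ j : Fin sO, ∑ k ∈ Finset.univ.filter (· < j), d k * (cO k + d k / 2)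
      = cO j ^ 2 / 2 := by
    intro j
    rw [← hCval j]
    apply key_telescope _ (fun n => C n ^ 2 / 2) (by show C 0 ^ 2 / 2 = 0; rw [hC0]; ring)
    intro n h
    rw [hdC n h, ← hCval ⟨n, h⟩]
    ring
  have key2 : ∀ i : Fin sO, ∑ j ∈ Finset.univ.filter (· < i),
      d j * (cO j ^ 2 / 2 + d j * (cO j / 2 + d j / 6)) = cO i ^ 3 / 6 := by
    intro i
    rw [← hCval i]
    apply key_telescope _ (fun n => C n ^ 3 / 6) (by show C 0 ^ 3 / 6 = 0; rw [hC0]; ring)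
    intro n h
    rw [hdC n h, ← hCval ⟨n, h⟩]
    ring
  have hAIc : ∀ q : Fin sI, ∑ r, AI q r * cI r = (AI *ᵥ cI) q := by
    intro q; simp [Matrix.mulVec, dotProduct]
  have hy : ∀ (j : Fin sO) (q : Fin sI),
      (misAff sI sO AI bI cO *ᵥ misCf sI sO cI cO) (j, q)
        = cO j ^ 2 / 2 + d j * (cO j * cI q + d j * (AI *ᵥ cI) q) := by
    intro j q
    have hexp : (misAff sI sO AI bI cO *ᵥ misCf sI sO cI cO) (j, q)
        = ∑ k : Fin sO, ∑ r : Fin sI,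
            misAff sI sO AI bI cO (j, q) (k, r) * misCf sI sO cI cO (k, r) := by
      simp [Matrix.mulVec, dotProduct, Fintype.sum_prod_type]
    rw [hexp]
    have hterm : ∀ k : Fin sO, ∑ r : Fin sI,
        misAff sI sO AI bI cO (j, q) (k, r) * misCf sI sO cI cO (k, r)
        = (if k < j then d k * (cO k + d k / 2) else 0)
          + (if k = j then d j * (cO j * cI q + d j * (AI *ᵥ cI) q) else 0) := by
      intro k
      rcases lt_trichotomy k j with h | h | h
      · rw [if_pos h, if_neg (ne_of_lt h)]
        have : ∀ r : Fin sI, misAff sI sO AI bI cO (j, q) (k, r) * misCf sI sO cI cO (k, r)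
            = d k * cO k * bI r + (d k * d k) * (bI r * cI r) := by
          intro r
          simp only [misAff, misCf, h, if_pos, ← hd]
          ring
        rw [Finset.sum_congr rfl (fun r _ => this r), Finset.sum_add_distrib,
          ← Finset.mul_sum, ← Finset.mul_sum, hbI1, hbI2]
        ring
      · subst h
        rw [if_neg (lt_irrefl k), if_pos rfl]
        have : ∀ r : Fin sI, misAff sI sO AI bI cO (k, q) (k, r) * misCf sI sO cI cO (k, r)
            = d k * cO k * AI q r + (d k * d k) * (AI q r * cI r) := by
          intro r
          simp only [misAff, misCf, lt_irrefl, if_false, if_pos rfl, if_true, ← hd]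
          ring
        rw [Finset.sum_congr rfl (fun r _ => this r), Finset.sum_add_distrib,
          ← Finset.mul_sum, ← Finset.mul_sum, hAIrow, hAIc]
        ring
      · rw [if_neg (not_lt.2 (le_of_lt h)), if_neg (ne_of_gt h)]
        have : ∀ r : Fin sI, misAff sI sO AI bI cO (j, q) (k, r) * misCf sI sO cI cO (k, r)
            = 0 := by
          intro r
          simp only [misAff]
          rw [if_neg (not_lt.2 (le_of_lt h)), if_neg (ne_of_gt h)]
          ring
        rw [Finset.sum_congr rfl (fun r _ => this r)]
        simp
    rw [Finset.sum_congr rfl (fun k _ => hterm k), Finset.sum_add_distrib,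
      ← Finset.sum_filter, key1, Finset.sum_ite_eq' Finset.univ j, if_pos (Finset.mem_univ j)]
  have hz : ∀ i : Fin sO,
      (misAsf sI sO bI cO *ᵥ (misAff sI sO AI bI cO *ᵥ misCf sI sO cI cO)) i
        = cO i ^ 3 / 6 := by
    intro i
    have hexp : (misAsf sI sO bI cO *ᵥ (misAff sI sO AI bI cO *ᵥ misCf sI sO cI cO)) i
        = ∑ k : Fin sO, ∑ r : Fin sI, misAsf sI sO bI cO i (k, r)
            * (misAff sI sO AI bI cO *ᵥ misCf sI sO cI cO) (k, r) := by
      simp [Matrix.mulVec, dotProduct, Fintype.sum_prod_type]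
    rw [hexp]
    have hterm : ∀ k : Fin sO, ∑ r : Fin sI, misAsf sI sO bI cO i (k, r)
        * (misAff sI sO AI bI cO *ᵥ misCf sI sO cI cO) (k, r)
        = (if k < i then d k * (cO k ^ 2 / 2 + d k * (cO k / 2 + d k / 6)) else 0) := by
      intro k
      by_cases h : k < i
      · rw [if_pos h]
        have : ∀ r : Fin sI, misAsf sI sO bI cO i (k, r)
            * (misAff sI sO AI bI cO *ᵥ misCf sI sO cI cO) (k, r)
            = d k * (cO k ^ 2 / 2) * bI r + (d k * d k * cO k) * (bI r * cI r)
              + (d k * d k * d k) * (bI r * (AI *ᵥ cI) r) := by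
          intro r
          rw [hy k r]
          simp only [misAsf, h, if_pos, ← hd]
          ring
        rw [Finset.sum_congr rfl (fun r _ => this r), Finset.sum_add_distrib,
          Finset.sum_add_distrib, ← Finset.mul_sum, ← Finset.mul_sum, ← Finset.mul_sum,
          hbI1, hbI2, hbI4]
        ring
      · rw [if_neg h]
        have : ∀ r : Fin sI, misAsf sI sO bI cO i (k, r)
            * (misAff sI sO AI bI cO *ᵥ misCf sI sO cI cO) (k, r) = 0 := by
          intro r
          simp only [misAsf, h, if_false]
          ring
        rw [Finset.sum_congr rfl (fun r _ => this r)]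
        simp
    rw [Finset.sum_congr rfl (fun k _ => hterm k), ← Finset.sum_filter, key2]
  have hdot : bO ⬝ᵥ (misAsf sI sO bI cO *ᵥ (misAff sI sO AI bI cO *ᵥ misCf sI sO cI cO))
      = ∑ i, bO i * (cO i ^ 3 / 6) := by
    simp only [dotProduct]
    exact Finset.sum_congr rfl (fun i _ => by rw [hz i])
  rw [hdot, Finset.mul_sum]
  exact Finset.sum_congr rfl (fun i _ => by ring)
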